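/- arXiv:2208.09649 — 6 statements merged into one kernel-verified Lean document; each statement's English description precedes it below -/
import Mathlib

section
/- Let n ≥ 1 and work in the multivariate polynomial ring P = MvPolynomial (Fin n ⊕ Sym2 (Fin n)) (ZMod 2), whose variables are D i := X (inl i) for i ∈ Fin n and E(i,j) := X (inr s(i,j)) for unordered pairs. Define the symmetric matrix A : Matrix (Fin n) (Fin n) P by A i j = E(i,j) for i ≠ j and A i i = D i + ∑_{j ≠ i} E(i,j). Let I be the ideal of P generated by the squares (X v)^2 of all variables v. Then det A − ∏_{i} A i i ∈ I; i.e., in the Wang algebra P/I the determinant of A equals the product of its diagonal entries. -/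
/-!
In the Leibniz expansion of the determinant the terms of `σ` and `σ⁻¹` agree for a symmetric
matrix, so over a ring with `2 = 0` they cancel in pairs and signs disappear. What survives are
the involutions; one other than the identity swaps some `i ≠ j`, so its term contains the factor
`A i j * A j i = A i j ^ 2 = 0`. Only the identity, i.e. the product of the diagonal, remains.
-/

open MvPolynomial Finset

namespace Matrix

variable {n R : Type*} [Fintype n] [CommRing R]

lemma prod_perm_inv_eq_of_isSymm {M : Matrix n n R} (hM : M.IsSymm) (σ : Equiv.Perm n) :
    ∏ i, M (σ⁻¹ i) i = ∏ i, M (σ i) i :=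
  calc ∏ i, M (σ⁻¹ i) i = ∏ i, M (σ⁻¹ (σ i)) (σ i) := (Equiv.prod_comp σ _).symm
    _ = ∏ i, M (σ i) i := by simp only [Equiv.Perm.coe_inv, Equiv.symm_apply_apply, hM.apply]

lemma prod_perm_eq_zero_of_involutive [DecidableEq n] {M : Matrix n n R} (hM : M.IsSymm)
    (hsq : ∀ i j, i ≠ j → M i j ^ 2 = 0) {σ : Equiv.Perm n} (hσ : Function.Involutive σ)
    (h1 : σ ≠ 1) : ∏ i, M (σ i) i = 0 := by
  obtain ⟨i, hi⟩ : ∃ i, σ i ≠ i := not_forall.1 fun h => h1 (Equiv.ext h)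
  have hσi : σ i ∈ univ.erase i := mem_erase.2 ⟨hi, mem_univ _⟩
  rw [← mul_prod_erase _ _ (mem_univ i), ← mul_prod_erase _ _ hσi, hσ i, ← mul_assoc,
    hM.apply, ← sq, hsq _ _ hi.symm, zero_mul]

theorem det_eq_prod_diag_of_isSymm [DecidableEq n] (h2 : (2 : R) = 0) {M : Matrix n n R}
    (hM : M.IsSymm) (hsq : ∀ i j, i ≠ j → M i j ^ 2 = 0) : M.det = ∏ i, M i i := by
  have hsign (σ : Equiv.Perm n) (x : R) : Equiv.Perm.sign σ • x = x := by
    have hneg : -x = x := neg_eq_of_add_eq_zero_left (by rw [← two_mul, h2, zero_mul])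
    rcases Int.units_eq_one_or (Equiv.Perm.sign σ) with h | h <;> simp [h, hneg]
  have hrest : ∑ σ ∈ univ.erase (1 : Equiv.Perm n), ∏ i, M (σ i) i = 0 := by
    refine sum_involution (fun σ _ => σ⁻¹) (fun σ _ => ?_) (fun σ hσ hne hinv => ?_)
      (fun σ hσ => ?_) (fun σ _ => inv_inv σ)
    · rw [prod_perm_inv_eq_of_isSymm hM, ← two_mul, h2, zero_mul]
    · exact hne (prod_perm_eq_zero_of_involutive hM hsq
        (fun i => congr($(inv_eq_iff_mul_eq_one.1 hinv) i)) (ne_of_mem_erase hσ))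
    · simpa using hσ
  rw [det_apply, ← add_sum_erase _ _ (mem_univ 1)]
  simp [hsign, hrest]

end Matrix

theorem wang_algebra_det_general (n : ℕ)
    (A : Matrix (Fin n) (Fin n) (MvPolynomial (Fin n ⊕ Sym2 (Fin n)) (ZMod 2)))
    (hoff : ∀ i j : Fin n, i ≠ j → A i j = X (Sum.inr s(i, j))) :
    A.det - ∏ i, A i i ∈
      Ideal.span (Set.range fun v : Fin n ⊕ Sym2 (Fin n) =>
        (X v : MvPolynomial (Fin n ⊕ Sym2 (Fin n)) (ZMod 2)) ^ 2) := by
  set φ := Ideal.Quotient.mk (Ideal.span (Set.range fun v : Fin n ⊕ Sym2 (Fin n) =>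
    (X v : MvPolynomial (Fin n ⊕ Sym2 (Fin n)) (ZMod 2)) ^ 2))
  have hA : A.IsSymm := by
    ext i j
    rcases eq_or_ne i j with rfl | hij
    · rfl
    · rw [Matrix.transpose_apply, hoff i j hij, hoff j i hij.symm, Sym2.eq_swap]
  rw [← Ideal.Quotient.eq_zero_iff_mem, map_sub, sub_eq_zero, RingHom.map_det, map_prod]
  refine Matrix.det_eq_prod_diag_of_isSymm ?_ (hA.map φ) fun i j hij => ?_
  · exact (map_ofNat (algebraMap (ZMod 2) _) 2).symm.trans (map_zero _)
  · rw [RingHom.mapMatrix_apply, Matrix.map_apply, hoff i j hij, ← map_pow,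
      Ideal.Quotient.eq_zero_iff_mem]
    exact Ideal.subset_span ⟨_, rfl⟩

/-- **Wang Algebra (Theorem 1).** In the Wang algebra, realized as the quotient of the
polynomial ring over `ZMod 2` by the ideal generated by the squares of all variables,
the determinant of the symmetric matrix `A` (with off-diagonal entries `E(i,j)` and
diagonal entries `D i + ∑_{j ≠ i} E(i,j)`) equals the product of its diagonal entries. -/
theorem wang_algebra_det (n : ℕ) (hn : 1 ≤ n)
    (A : Matrix (Fin n) (Fin n) (MvPolynomial (Fin n ⊕ Sym2 (Fin n)) (ZMod 2)))
    (hoff : ∀ i j : Fin n, i ≠ j → A i j = X (Sum.inr s(i, j)))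
    (hdiag : ∀ i : Fin n,
      A i i = X (Sum.inl i) +
        ∑ j ∈ Finset.univ.filter (fun j => j ≠ i), X (Sum.inr s(i, j))) :
    A.det - ∏ i, A i i ∈
      Ideal.span (Set.range fun v : Fin n ⊕ Sym2 (Fin n) =>
        (X v : MvPolynomial (Fin n ⊕ Sym2 (Fin n)) (ZMod 2)) ^ 2) :=
  wang_algebra_det_general n A hoff
end

section
/- Let R be a commutative ring and A : Matrix (Fin n) (Fin n) R a symmetric matrix (Aᵀ = A). Then det A − ∏_{i} A i i lies in the ideal of R generated by the element 2 together with all squares (A i j)² of off-diagonal entries (i ≠ j). In other words, except for the main-diagonal term, every term of the Leibniz expansion of det A either carries a factor 2 or contains the square of an off-diagonal entry. -/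
/-!
Reduce modulo the ideal. Over a ring in which `2 = 0` signs disappear, so `det B` is the sum of
the Leibniz products `∏ i, B (σ i) i`. For symmetric `B` the products of `σ` and `σ⁻¹` agree, so
they cancel in pairs; a permutation that is its own inverse pairs with itself, but unless it is
the identity it swaps some `i ≠ j` and its product contains `B i j ^ 2 = 0`. Only the diagonal
product survives.
-/

namespace Matrix

variable {ι : Type*} [Fintype ι]

theorem IsSymm.prod_perm_inv {M : Type*} [CommMonoid M] {B : Matrix ι ι M} (hB : B.IsSymm)
    (σ : Equiv.Perm ι) : ∏ i, B (σ⁻¹ i) i = ∏ i, B (σ i) i :=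
  calc ∏ i, B (σ⁻¹ i) i = ∏ i, B i (σ⁻¹ i) := Finset.prod_congr rfl fun i _ => hB.apply _ _
    _ = ∏ i, B (σ i) i := by rw [← Equiv.prod_comp σ]; simp

theorem IsSymm.prod_perm_eq_zero_of_inv_eq {M₀ : Type*} [CommMonoidWithZero M₀]
    {B : Matrix ι ι M₀} (hB : B.IsSymm) (hsq : ∀ i j, i ≠ j → B i j ^ 2 = 0)
    {σ : Equiv.Perm ι} (hσ : σ⁻¹ = σ) (hσ₁ : σ ≠ 1) : ∏ i, B (σ i) i = 0 := by
  classical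
  obtain ⟨i, hi⟩ : ∃ i, σ i ≠ i := not_forall.mp fun h => hσ₁ (Equiv.ext h)
  have hσσ : σ (σ i) = i :=
    calc σ (σ i) = σ⁻¹ (σ i) := by rw [hσ]
      _ = i := σ.symm_apply_apply i
  rw [← Finset.prod_mul_prod_compl {σ i, i}, Finset.prod_pair hi, hσσ, hB.apply, ← sq,
    hsq _ _ hi, zero_mul]

theorem IsSymm.det_eq_prod_diag_of_two_eq_zero [DecidableEq ι] {S : Type*} [CommRing S]
    (h2 : (2 : S) = 0) {B : Matrix ι ι S} (hB : B.IsSymm)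
    (hsq : ∀ i j, i ≠ j → B i j ^ 2 = 0) : B.det = ∏ i, B i i := by
  have hsign (u : ℤˣ) (x : S) : u • x = x := by
    rcases Int.units_eq_one_or u with rfl | rfl
    · exact one_smul _ _
    · rw [Units.neg_smul, one_smul, neg_eq_iff_add_eq_zero, ← two_mul, h2, zero_mul]
  have hoff : ∑ σ ∈ Finset.univ.erase (1 : Equiv.Perm ι), ∏ i, B (σ i) i = 0 := by
    refine Finset.sum_involution (fun σ _ => σ⁻¹) (fun σ _ => ?_) (fun σ hσ hne hinv => ?_)
      (fun σ hσ => ?_) (fun σ _ => inv_inv σ)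
    · rw [hB.prod_perm_inv, ← two_mul, h2, zero_mul]
    · exact hne (hB.prod_perm_eq_zero_of_inv_eq hsq hinv (Finset.ne_of_mem_erase hσ))
    · exact Finset.mem_erase.mpr ⟨inv_ne_one.mpr (Finset.ne_of_mem_erase hσ), Finset.mem_univ _⟩
  rw [det_apply]
  simp only [hsign]
  rw [← Finset.add_sum_erase _ _ (Finset.mem_univ 1), hoff, add_zero]
  rfl

end Matrix

/-- **Lemma 1.** For a symmetric matrix `A` over a commutative ring, the difference between
`det A` and its main-diagonal product lies in the ideal generated by `2` together with the
squares of all off-diagonal entries: except for the main-diagonal term, every Leibniz term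
of `det A` carries a factor `2` or contains the square of an off-diagonal entry. -/
theorem det_sub_diag_prod_mem_span {R : Type*} [CommRing R] {n : ℕ}
    (A : Matrix (Fin n) (Fin n) R) (hA : A.IsSymm) :
    A.det - ∏ i, A i i ∈
      Ideal.span ({(2 : R)} ∪ {x : R | ∃ i j : Fin n, i ≠ j ∧ x = (A i j) ^ 2}) := by
  set I := Ideal.span ({(2 : R)} ∪ {x : R | ∃ i j : Fin n, i ≠ j ∧ x = (A i j) ^ 2})
  have hmk {x : R} (hx : x ∈ I) : Ideal.Quotient.mk I x = 0 := Ideal.Quotient.eq_zero_iff_mem.mpr hx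
  rw [← Ideal.Quotient.eq_zero_iff_mem, map_sub, RingHom.map_det, map_prod, sub_eq_zero]
  refine (hA.map _).det_eq_prod_diag_of_two_eq_zero ?_ fun i j hij => ?_
  · simpa only [map_ofNat] using hmk (Ideal.subset_span (Or.inl rfl))
  · simpa using hmk (Ideal.subset_span (Or.inr ⟨i, j, hij, rfl⟩))
end

section
/- Let R be a commutative ring and A : Matrix (Fin n) (Fin n) R a symmetric matrix (Aᵀ = A). Then there exists r ∈ R such that det A = ∑_{σ : σ² = 1} sgn(σ) ∏_{i} A i (σ i) + 2r, where the sum runs over all permutations σ of Fin n satisfying σ² = 1 (including the identity). -/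
/-!
In the Leibniz expansion of `det A`, the terms of `σ` and `σ⁻¹` coincide when `A` is symmetric.
The permutations with `σ ^ 2 ≠ 1` are exactly those with `σ⁻¹ ≠ σ`, so their terms pair up
and contribute an even element.
-/

open Equiv

theorem Finset.two_dvd_sum_of_involution {ι R : Type*} [CommRing R] {s : Finset ι} {f : ι → R}
    (g : ι → ι) (hg_mem : ∀ a ∈ s, g a ∈ s) (hg_invol : ∀ a ∈ s, g (g a) = a)
    (hg_ne : ∀ a ∈ s, g a ≠ a) (hf : ∀ a ∈ s, f (g a) = f a) :
    2 ∣ ∑ a ∈ s, f a := by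
  rw [← Ideal.mem_span_singleton, ← Ideal.Quotient.eq_zero_iff_mem, map_sum]
  refine Finset.sum_involution (fun a _ => g a) (fun a ha => ?_) (fun a ha _ => hg_ne a ha)
    hg_mem hg_invol
  rw [hf a ha, ← two_mul, ← map_ofNat (Ideal.Quotient.mk _) 2, ← map_mul,
    Ideal.Quotient.eq_zero_iff_mem, Ideal.mem_span_singleton]
  exact dvd_mul_right 2 _

theorem Matrix.IsSymm.prod_apply_perm_inv {n R : Type*} [Fintype n] [CommMonoid R]
    {A : Matrix n n R} (hA : A.IsSymm) (σ : Perm n) :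
    ∏ i, A i (σ⁻¹ i) = ∏ i, A i (σ i) :=
  calc ∏ i, A i (σ⁻¹ i)
    _ = ∏ i, A (σ i) (σ⁻¹ (σ i)) := (Equiv.prod_comp σ fun j => A j (σ⁻¹ j)).symm
    _ = ∏ i, A i (σ i) := by simp only [Perm.coe_inv, symm_apply_apply, hA.apply]

theorem Equiv.Perm.inv_ne_self_iff_sq_ne_one {α : Type*} (σ : Perm α) :
    σ⁻¹ ≠ σ ↔ σ ^ 2 ≠ 1 := by
  rw [ne_eq, inv_eq_iff_mul_eq_one, sq]

/-- For a symmetric matrix, all Leibniz terms coming from non-involutive permutations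
pair up, so `det A` equals the sum over involutions plus an even element. -/
theorem det_eq_involution_sum_add_even {R : Type*} [CommRing R] {n : ℕ}
    (A : Matrix (Fin n) (Fin n) R) (hA : A.IsSymm) :
    ∃ r : R, A.det =
      (∑ σ ∈ Finset.univ.filter (fun σ : Equiv.Perm (Fin n) => σ ^ 2 = 1),
        (Equiv.Perm.sign σ : ℤ) • ∏ i, A i (σ i)) + 2 * r := by
  set term : Perm (Fin n) → R := fun σ => (Perm.sign σ : ℤ) • ∏ i, A i (σ i)
  have hdet : A.det = ∑ σ, term σ := by
    simp only [← A.det_transpose, Matrix.det_apply, Matrix.transpose_apply, Units.smul_def, term]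
  obtain ⟨r, hr⟩ : 2 ∣ ∑ σ ∈ Finset.univ.filter (fun σ : Perm (Fin n) => ¬ σ ^ 2 = 1), term σ := by
    refine Finset.two_dvd_sum_of_involution (·⁻¹) (fun σ hσ => ?_) (fun σ _ => inv_inv σ)
      (fun σ hσ => ?_) (fun σ _ => ?_)
    · simpa [inv_pow] using hσ
    · exact σ.inv_ne_self_iff_sq_ne_one.mpr (Finset.mem_filter.mp hσ).2
    · simp only [term, Perm.sign_inv, hA.prod_apply_perm_inv]
  exact ⟨r, by rw [hdet, ← Finset.sum_filter_add_sum_filter_not _ (fun σ => σ ^ 2 = 1), hr]⟩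
end

section
/- Let R be a commutative ring, let d : Fin n → R and c : Fin n → Fin n → R be arbitrary (no symmetry assumed), and define A : Matrix (Fin n) (Fin n) R by A i j = c i j for i ≠ j and A i i = d i − ∑_{j ≠ i} c i j. Call a function f : Fin n → Option (Fin n) admissible if f i ≠ some i for all i and f is acyclic, i.e. there is no index i with Relation.TransGen (fun i j => f i = some j) i i. Then det A = ∑ over admissible f of (−1)^{#{i : f i ≠ none}} · ∏_{i} (if f i = none then d i else c i (the value of f i)). In particular, every Leibniz term of det A involving an off-diagonal entry via a nontrivial permutation is cancelled, and only cycle-free selections survive. -/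
open Finset Matrix Relation

/-!
Row `i` of `A` is `d i • e i + ∑ j, (-c i j) • (e i - e j)`, the term `j = i` being zero.
By multilinearity, `det A` is the sum over all selections `f` of the product of the chosen
coefficients times `det (1 - P_f)`, where `P_f` is the 0/1 matrix of the graph `i → f i`.
If this graph is acyclic, ordering the indices by their number of descendants makes `1 - P_f`
unitriangular, so `det (1 - P_f) = 1`. If it has a cycle through `i₀`, the indicator of the
indices from which `i₀` is reachable is a kernel vector of `1 - P_f` with entry `1` at `i₀`,
so `det (1 - P_f) = 0`.
-/

/-- A selection `f : Fin n → Option (Fin n)` is admissible if no index selects itself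
and the directed graph with an edge `i → j` whenever `f i = some j` has no cycle. -/
def Admissible {n : ℕ} (f : Fin n → Option (Fin n)) : Prop :=
  (∀ i, f i ≠ some i) ∧ ∀ i, ¬ Relation.TransGen (fun i j => f i = some j) i i

theorem admissible_iff {n : ℕ} (f : Fin n → Option (Fin n)) :
    Admissible f ↔ ∀ i, ¬ TransGen (fun i j => f i = some j) i i :=
  ⟨And.right, fun h => ⟨fun i hi => h i (TransGen.single hi), h⟩⟩

theorem reflTransGen_iff_of_transGen_self {α : Type*} {f : α → Option α} {i₀ k : α}
    (h : TransGen (fun i j => f i = some j) i₀ i₀) :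
    ReflTransGen (fun i j => f i = some j) k i₀ ↔
      ∃ j, f k = some j ∧ ReflTransGen (fun i j => f i = some j) j i₀ := by
  refine ⟨fun hk => ?_, fun ⟨j, hkj, hj⟩ => ReflTransGen.head hkj hj⟩
  rcases hk.cases_head with rfl | hstep
  · exact TransGen.head'_iff.mp h
  · exact hstep

namespace Matrix

variable {ι R : Type*} [Fintype ι] [DecidableEq ι] [CommRing R]

theorem det_eq_prod_diag_of_rank {α : Type*} [LinearOrder α] (M : Matrix ι ι R) (rk : ι → α)
    (hrk : ∀ i j, i ≠ j → M i j ≠ 0 → rk j < rk i) : M.det = ∏ i, M i i := by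
  let e := Fintype.equivFin ι
  let _ : LinearOrder ι := LinearOrder.lift' (fun i => toLex (rk i, e i)) fun i j hij =>
    e.injective (congrArg (fun p => (ofLex p).2) hij)
  refine det_of_isLowerTriangular M fun i j (hij : i < j) => ?_
  by_contra hne
  have hji : toLex (rk j, e j) < toLex (rk i, e i) :=
    Prod.Lex.toLex_lt_toLex.mpr (Or.inl (hrk i j hij.ne hne))
  exact lt_asymm hij hji

def selectionMatrix (f : ι → Option ι) : Matrix ι ι R :=
  of fun i j => if f i = some j then 1 else 0

theorem selectionMatrix_mulVec (f : ι → Option ι) (v : ι → R) (i : ι) :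
    (selectionMatrix f *ᵥ v) i = (f i).elim 0 v := by
  cases h : f i <;> simp [selectionMatrix, mulVec, dotProduct, h]

theorem det_one_sub_selectionMatrix_of_transGen {f : ι → Option ι} {i₀ : ι}
    (h : TransGen (fun i j => f i = some j) i₀ i₀) :
    (1 - selectionMatrix f : Matrix ι ι R).det = 0 := by
  classical
  let v : ι → R := fun k => if ReflTransGen (fun i j => f i = some j) k i₀ then 1 else 0
  refine det_eq_zero_of_mulVec_eq_zero_of_mem_nonZeroDivisors (v := v) (i := i₀) ?_
    (by rw [show v i₀ = 1 from if_pos ReflTransGen.refl]; exact one_mem _)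
  ext k
  rw [sub_mulVec, one_mulVec, Pi.sub_apply, selectionMatrix_mulVec, Pi.zero_apply, sub_eq_zero]
  simp only [v]
  rw [reflTransGen_iff_of_transGen_self h (k := k)]
  cases f k <;> simp

theorem det_one_sub_selectionMatrix_of_acyclic {f : ι → Option ι}
    (h : ∀ i, ¬ TransGen (fun i j => f i = some j) i i) :
    (1 - selectionMatrix f : Matrix ι ι R).det = 1 := by
  classical
  let rk : ι → ℕ := fun i => #{k | TransGen (fun i j => f i = some j) i k}
  have hrk : ∀ i j, f i = some j → rk j < rk i := fun i j hij => by
    refine Finset.card_lt_card ⟨fun k hk => ?_, fun hsub => h j ?_⟩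
    · simp only [mem_filter, mem_univ, true_and] at hk ⊢
      exact TransGen.head hij hk
    · simpa using hsub (mem_filter.mpr ⟨mem_univ j, .single hij⟩)
  rw [det_eq_prod_diag_of_rank _ rk, Finset.prod_eq_one]
  · intro i _
    simp [selectionMatrix, show f i ≠ some i from fun hi => h i (TransGen.single hi)]
  · intro i j hij hne
    refine hrk i j (not_not.mp fun hf => hne ?_)
    simp [selectionMatrix, one_apply_ne hij, hf]

open Classical in
theorem det_one_sub_selectionMatrix (f : ι → Option ι) :
    (1 - selectionMatrix f : Matrix ι ι R).det =
      if ∀ i, ¬ TransGen (fun i j => f i = some j) i i then 1 else 0 := by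
  split_ifs with h
  · exact det_one_sub_selectionMatrix_of_acyclic h
  · exact det_one_sub_selectionMatrix_of_transGen (Classical.not_forall_not.mp h).choose_spec

theorem det_eq_sum_prod_mul_det_one_sub_selectionMatrix (A : Matrix ι ι R)
    (w : ι → Option ι → R)
    (hA : ∀ i j, A i j = ∑ o, w i o * ((1 : Matrix ι ι R) i j - if o = some j then 1 else 0)) :
    A.det = ∑ f : ι → Option ι, (∏ i, w i (f i)) * (1 - selectionMatrix f : Matrix ι ι R).det := by
  let row : ι → Option ι → ι → R := fun i o j =>
    (1 : Matrix ι ι R) i j - if o = some j then 1 else 0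
  have hrows : A = of fun i => ∑ o, w i o • row i o := by
    ext i j
    simp [hA, row]
  have hsel : ∀ f : ι → Option ι, of (fun i => row i (f i)) = 1 - selectionMatrix f := fun f => by
    ext i j
    simp [row, selectionMatrix, sub_apply]
  calc A.det = detRowAlternating (fun i => ∑ o, w i o • row i o) := congrArg det hrows
    _ = ∑ f : ι → Option ι, detRowAlternating (fun i => w i (f i) • row i (f i)) :=
      MultilinearMap.map_sum _ _
    _ = _ := sum_congr rfl fun f _ => by
      rw [← hsel]
      exact detRowAlternating.toMultilinearMap.map_smul_univ (fun i => w i (f i)) _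

theorem apply_eq_sum_option_of_diag_eq_sub_sum {A : Matrix ι ι R} {d : ι → R} {c : ι → ι → R}
    (hoff : ∀ i j, i ≠ j → A i j = c i j)
    (hdiag : ∀ i, A i i = d i - ∑ j ∈ univ.filter (fun j => j ≠ i), c i j) (i j : ι) :
    A i j = ∑ o : Option ι, o.elim (d i) (fun k => -c i k) *
      ((1 : Matrix ι ι R) i j - if o = some j then 1 else 0) := by
  rw [Fintype.sum_option]
  by_cases hij : i = j
  · subst hij
    simp only [hdiag, ne_eq, sum_filter, ite_not, sub_eq_add_neg, ← sum_neg_distrib,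
      Option.elim_none, one_apply_eq, reduceCtorEq, ↓reduceIte, neg_zero, add_zero, mul_one,
      Option.elim_some, Option.some.injEq, neg_mul, add_right_inj]
    refine sum_congr rfl fun k _ => ?_
    split_ifs <;> ring
  · simp [hoff i j hij, one_apply_ne hij]

end Matrix

theorem prod_option_elim_neg {ι R : Type*} [Fintype ι] [CommRing R] (f : ι → Option ι) (d : ι → R)
    (c : ι → ι → R) :
    ∏ i, (f i).elim (d i) (fun j => -c i j) =
      (-1) ^ #{i | f i ≠ none} * ∏ i, (f i).elim (d i) (c i) := by
  have hsign : ∀ i, (f i).elim (d i) (fun j => -c i j) =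
      (if f i ≠ none then -1 else 1) * (f i).elim (d i) (c i) := fun i => by
    cases f i <;> simp
  rw [prod_congr rfl fun i _ => hsign i, prod_mul_distrib, prod_ite, prod_const_one, mul_one,
    prod_const]

open Classical in
/-- **Lemma 2.** With diagonal entries `d i − ∑_{j ≠ i} c i j` (no symmetry assumed),
all Leibniz terms of `det A` involving an off-diagonal entry through a cycle cancel:
only acyclic selections survive. -/
theorem det_eq_sum_admissible {R : Type*} [CommRing R] {n : ℕ}
    (d : Fin n → R) (c : Fin n → Fin n → R)
    (A : Matrix (Fin n) (Fin n) R)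
    (hoff : ∀ i j : Fin n, i ≠ j → A i j = c i j)
    (hdiag : ∀ i : Fin n,
      A i i = d i - ∑ j ∈ Finset.univ.filter (fun j => j ≠ i), c i j) :
    A.det = ∑ f ∈ Finset.univ.filter (fun f : Fin n → Option (Fin n) => Admissible f),
      (-1 : R) ^ (Finset.univ.filter (fun i => f i ≠ none)).card *
        ∏ i, Option.elim (f i) (d i) (fun j => c i j) := by
  rw [det_eq_sum_prod_mul_det_one_sub_selectionMatrix A _
    (apply_eq_sum_option_of_diag_eq_sub_sum hoff hdiag)]
  simp_rw [det_one_sub_selectionMatrix, mul_ite, mul_one, mul_zero, ← sum_filter, admissible_iff]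
  exact sum_congr rfl fun f _ => prod_option_elim_neg f d c
end

section
/- Let B₀, D₀, D₂ be positive reals, D₁ ≥ 0 a real, and t > 0. Suppose z ∈ ℂ with Im z ≠ 0 satisfies D₂·t·z² + (D₀ + D₁·t)·z + B₀ = 0. Then |z + B₀/D₀|² = (B₀/D₀)² · (1 − D₀·D₁/(B₀·D₂)). In particular, as t varies over (0, ∞), all nonreal roots of the quadratic lie on a fixed circle in the complex plane with center −B₀/D₀ on the real axis and radius (B₀/D₀)·√(1 − D₀D₁/(B₀D₂)). -/
/-!
Vieta: a nonreal root `z` of a real quadratic `a z² + b z + c` has `conj z` as the other root,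
so `2 a Re z = -b` and `a |z|² = c`. Hence `|z + r|² = |z|² + 2 r Re z + r²` is determined by the
coefficients, and for the root-locus quadratic with `r = B₀/D₀` the dependence on `t` cancels.
-/

namespace Complex

variable {a b c : ℝ} {z : ℂ}

theorem two_mul_mul_re_add_eq_zero_of_quadratic_eq_zero
    (h : (a : ℂ) * z ^ 2 + b * z + c = 0) (hz : z.im ≠ 0) : 2 * a * z.re + b = 0 := by
  have him := congrArg im h
  simp only [add_im, mul_im, ofReal_re, ofReal_im, pow_two, mul_re, zero_mul,
    add_zero, zero_im] at him
  have : z.im * (2 * a * z.re + b) = 0 := by linear_combination him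
  exact (mul_eq_zero.mp this).resolve_left hz

theorem mul_normSq_eq_of_quadratic_eq_zero
    (h : (a : ℂ) * z ^ 2 + b * z + c = 0) (hz : z.im ≠ 0) : a * normSq z = c := by
  have hre := congrArg re h
  simp only [add_re, mul_re, ofReal_re, ofReal_im, pow_two, mul_im, zero_mul, sub_zero,
    zero_re] at hre
  rw [normSq_apply]
  linear_combination -hre + z.re * two_mul_mul_re_add_eq_zero_of_quadratic_eq_zero h hz

theorem sq_norm_add_ofReal (z : ℂ) (r : ℝ) : ‖z + r‖ ^ 2 = normSq z + 2 * r * z.re + r ^ 2 := by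
  simp only [Complex.sq_norm, normSq_apply, add_re, add_im, ofReal_re, ofReal_im]
  ring

end Complex

open Complex in
theorem root_locus_circle_general (B₀ D₀ D₁ D₂ t : ℝ)
    (hB₀ : 0 < B₀) (hD₀ : 0 < D₀) (hD₂ : 0 < D₂) (ht : 0 < t)
    (z : ℂ) (hz : z.im ≠ 0)
    (hroot : (D₂ : ℂ) * t * z ^ 2 + ((D₀ : ℂ) + D₁ * t) * z + B₀ = 0) :
    ‖z + (B₀ / D₀ : ℝ)‖ ^ 2 =
      (B₀ / D₀) ^ 2 * (1 - D₀ * D₁ / (B₀ * D₂)) := by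
  have hroot' : ((D₂ * t : ℝ) : ℂ) * z ^ 2 + ((D₀ + D₁ * t : ℝ) : ℂ) * z + (B₀ : ℂ) = 0 := by
    push_cast; exact hroot
  have hD₂t : D₂ * t ≠ 0 := by positivity
  have hre : z.re = -(D₀ + D₁ * t) / (2 * (D₂ * t)) := by
    field_simp
    linear_combination two_mul_mul_re_add_eq_zero_of_quadratic_eq_zero hroot' hz
  have hnormSq : normSq z = B₀ / (D₂ * t) := by
    rw [eq_div_iff hD₂t, mul_comm]
    exact mul_normSq_eq_of_quadratic_eq_zero hroot' hz
  rw [sq_norm_add_ofReal, hre, hnormSq]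
  field_simp
  ring

/-- **Root locus (Eq. (6)).** Nonreal roots of `D₂ t z² + (D₀ + D₁ t) z + B₀ = 0`
lie, for every `t > 0`, on the fixed circle of center `−B₀/D₀` and radius
`(B₀/D₀)·√(1 − D₀D₁/(B₀D₂))`. -/
theorem root_locus_circle (B₀ D₀ D₁ D₂ t : ℝ)
    (hB₀ : 0 < B₀) (hD₀ : 0 < D₀) (hD₂ : 0 < D₂) (hD₁ : 0 ≤ D₁) (ht : 0 < t)
    (z : ℂ) (hz : z.im ≠ 0)
    (hroot : (D₂ : ℂ) * t * z ^ 2 + ((D₀ : ℂ) + D₁ * t) * z + B₀ = 0) :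
    ‖z + (B₀ / D₀ : ℝ)‖ ^ 2 =
      (B₀ / D₀) ^ 2 * (1 - D₀ * D₁ / (B₀ * D₂)) :=
  root_locus_circle_general B₀ D₀ D₁ D₂ t hB₀ hD₀ hD₂ ht z hz hroot
end

section
/- Let R > 0, C > 0, R_S ≥ 0, G_P ≥ 0, C_B > 0 be reals. Define R₁ = R²G_P/2, L₁ = R²C/2, L₃ = R²C_B − L₁/2, and set B₀ = 1 + G_P·(R/2 + R²G_P/4 + R_S), D₀ = (2R + R²G_P + 4R_S)·C/4, D₁ = R²G_P, D₂ = R²C. Let s ∈ ℂ be such that s·C + G_P ≠ 0 and B₀ + (D₀ + D₁C_B)s + D₂C_B·s² ≠ 0, and define the Thévenin impedance Z_Th = (s·L₁ + R₁ + R)/2. Then (1/(G_P + sC)) / (Z_Th + R_S + s·L₃ + 1/(G_P + sC)) = 1/(B₀ + (D₀ + D₁·C_B)·s + D₂·C_B·s²). -/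
/-- **Symmetrical T-coil transfer function (Eqs. (5), (11)–(14)).** For the symmetrical
constant-R bridged T-coil, the transfer function to the load capacitor computed from the
Thévenin equivalent circuit equals the second-order form
`1/(B₀ + (D₀ + D₁C_B)s + D₂C_B s²)`. -/
theorem symmetrical_tcoil_transfer
    (R C R_S G_P C_B R₁ L₁ L₃ B₀ D₀ D₁ D₂ : ℝ)
    (hR : 0 < R) (hC : 0 < C) (hRS : 0 ≤ R_S) (hGP : 0 ≤ G_P) (hCB : 0 < C_B)
    (hR₁ : R₁ = R ^ 2 * G_P / 2)
    (hL₁ : L₁ = R ^ 2 * C / 2)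
    (hL₃ : L₃ = R ^ 2 * C_B - L₁ / 2)
    (hB₀ : B₀ = 1 + G_P * (R / 2 + R ^ 2 * G_P / 4 + R_S))
    (hD₀ : D₀ = (2 * R + R ^ 2 * G_P + 4 * R_S) * C / 4)
    (hD₁ : D₁ = R ^ 2 * G_P)
    (hD₂ : D₂ = R ^ 2 * C)
    (s : ℂ) (h₁ : s * C + G_P ≠ 0)
    (h₂ : (B₀ : ℂ) + (D₀ + D₁ * C_B) * s + D₂ * C_B * s ^ 2 ≠ 0)
    (Z_Th : ℂ) (hZ : Z_Th = (s * L₁ + R₁ + R) / 2) :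
    (1 / ((G_P : ℂ) + s * C)) / (Z_Th + R_S + s * L₃ + 1 / ((G_P : ℂ) + s * C)) =
      1 / ((B₀ : ℂ) + (D₀ + D₁ * C_B) * s + D₂ * C_B * s ^ 2) := by
  have h₁' : (G_P : ℂ) + s * C ≠ 0 := by rwa [add_comm] at h₁
  subst hZ hL₃ hL₁ hR₁ hB₀ hD₀ hD₁ hD₂
  push_cast at h₂ ⊢
  set P : ℂ := 1 + G_P * (R / 2 + R ^ 2 * G_P / 4 + R_S) +
      ((2 * R + R ^ 2 * G_P + 4 * R_S) * C / 4 + R ^ 2 * G_P * C_B) * s +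
      R ^ 2 * C * C_B * s ^ 2 with hP
  set D : ℂ := (s * (R ^ 2 * C / 2) + R ^ 2 * G_P / 2 + R) / 2 + R_S +
      s * (R ^ 2 * C_B - R ^ 2 * C / 2 / 2) + 1 / (G_P + s * C) with hDdef
  have key : D * ((G_P : ℂ) + s * C) = P := by
    rw [hDdef, hP]; field_simp; ring
  have hD : D ≠ 0 := by
    intro h; exact h₂ (by rw [← key, h, zero_mul])
  rw [div_eq_div_iff hD h₂, ← key, one_mul]
  field_simp
end
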